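/- arXiv:2404.19608 — 3 statements merged into one kernel-verified Lean document; each statement's English description precedes it below -/
import Mathlib

section
/- The set of common periods of two overlaid cubic lattices, namely ℤ³ ∩ R·ℤ³ for a rotation matrix R ∈ SO(3), spans ℝ³ (i.e., contains three linearly independent vectors) if and only if all entries of R are rational numbers. -/
open Matrix

/-- A vector in ℝ³ with all integer entries, i.e. an element of ℤ³ ⊂ ℝ³. -/
def IsIntVec (v : Fin 3 → ℝ) : Prop := ∀ i, ∃ n : ℤ, v i = (n : ℝ)

/-- A 3×3 real matrix with all rational entries. -/
def IsRatMat (R : Matrix (Fin 3) (Fin 3) ℝ) : Prop := ∀ i j, ∃ q : ℚ, R i j = (q : ℝ)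

/-- Membership in ℤ³ ∩ R·ℤ³. -/
def InMoire (R : Matrix (Fin 3) (Fin 3) ℝ) (u : Fin 3 → ℝ) : Prop :=
  IsIntVec u ∧ ∃ a : Fin 3 → ℝ, IsIntVec a ∧ R.mulVec a = u

/-!
If `R aₖ = uₖ` with `aₖ, uₖ ∈ ℤ³` and the `uₖ` independent, the integer matrices `A`, `U` with
rows `aₖ`, `uₖ` satisfy `A Rᵀ = U` with `U`, hence `A`, invertible, so `Rᵀ = A⁻¹ U` is rational.
Conversely, if `d • R` is an integer matrix for a common denominator `d ≠ 0`, its columns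
`R (d eₖ)` are three independent vectors of `ℤ³ ∩ R·ℤ³`.
-/

namespace Matrix

variable {n : Type*} [Fintype n] [DecidableEq n] {K L : Type*} [Field K] [Field L]

theorem map_inv (f : K →+* L) (A : Matrix n n K) : A⁻¹.map f = (A.map f)⁻¹ := by
  have hdet : (A.map f).det = f A.det := (f.map_det A).symm
  have hadj : (A.map f).adjugate = A.adjugate.map f := (f.map_adjugate A).symm
  rw [inv_def, inv_def, hdet, hadj, Ring.inverse_eq_inv', Ring.inverse_eq_inv', ← map_inv₀]
  ext i j
  simp

theorem exists_map_eq_of_map_mul_eq (f : K →+* L) {A U : Matrix n n K} {X : Matrix n n L}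
    (hU : U.det ≠ 0) (h : A.map f * X = U.map f) : ∃ Y : Matrix n n K, Y.map f = X := by
  have hA : IsUnit (A.map f).det := by
    refine isUnit_iff_ne_zero.2 fun h0 => hU ?_
    rw [← map_eq_zero_iff f f.injective, RingHom.map_det, RingHom.mapMatrix_apply, ← h, det_mul,
      h0, zero_mul]
  refine ⟨A⁻¹ * U, ?_⟩
  rw [Matrix.map_mul, map_inv, ← h, ← Matrix.mul_assoc, nonsing_inv_mul _ hA, Matrix.one_mul]

end Matrix

theorem exists_map_ratCast_eq_of_isIntVec {v : Fin 3 → Fin 3 → ℝ} (hv : ∀ k, IsIntVec (v k)) :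
    ∃ V : Matrix (Fin 3) (Fin 3) ℚ, V.map (↑) = Matrix.of v := by
  choose z hz using hv
  exact ⟨Matrix.of fun k i => (z k i : ℚ), by ext k i; simp [hz]⟩

theorem IsRatMat.of_linearIndependent_inMoire {R : Matrix (Fin 3) (Fin 3) ℝ}
    {u : Fin 3 → Fin 3 → ℝ} (hu : ∀ k, InMoire R (u k)) (hli : LinearIndependent ℝ u) :
    IsRatMat R := by
  choose a ha hRa using fun k => (hu k).2
  obtain ⟨U, hU⟩ := exists_map_ratCast_eq_of_isIntVec fun k => (hu k).1
  obtain ⟨A, hA⟩ := exists_map_ratCast_eq_of_isIntVec ha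
  have hUdet : U.det ≠ 0 := by
    have hunit : IsUnit (Matrix.of u) := linearIndependent_rows_iff_isUnit.1 hli
    rw [← hU, isUnit_iff_isUnit_det, isUnit_iff_ne_zero] at hunit
    exact_mod_cast hunit
  have hmul : A.map (Rat.castHom ℝ) * Rᵀ = U.map (Rat.castHom ℝ) := by
    rw [Rat.coe_castHom, hA, hU]
    ext k i
    simp [← hRa k, mul_apply, mulVec, dotProduct, mul_comm]
  obtain ⟨Q, hQ⟩ := exists_map_eq_of_map_mul_eq (Rat.castHom ℝ) hUdet hmul
  exact fun i j => ⟨Q j i, by rw [← transpose_apply R, ← hQ]; rfl⟩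

theorem IsRatMat.exists_intCast_smul_eq {R : Matrix (Fin 3) (Fin 3) ℝ} (hR : IsRatMat R) :
    ∃ d : ℤ, d ≠ 0 ∧ ∃ Z : Matrix (Fin 3) (Fin 3) ℤ, (d : ℝ) • R = Z.map (↑) := by
  choose q hq using hR
  obtain ⟨⟨d, hd⟩, hZ⟩ := IsLocalization.exist_integer_multiples_of_finite (nonZeroDivisors ℤ)
    fun p : Fin 3 × Fin 3 => q p.1 p.2
  choose z hz using hZ
  refine ⟨d, nonZeroDivisors.ne_zero hd, Matrix.of fun i j => z (i, j), ?_⟩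
  ext i j
  have := congrArg (Rat.cast : ℚ → ℝ) (hz (i, j))
  simpa [hq] using this.symm

theorem exists_linearIndependent_inMoire_of_intCast_smul_eq {R : Matrix (Fin 3) (Fin 3) ℝ}
    (hR : R.det ≠ 0) {d : ℤ} (hd : d ≠ 0) {Z : Matrix (Fin 3) (Fin 3) ℤ}
    (hZ : (d : ℝ) • R = Z.map (↑)) :
    ∃ u : Fin 3 → Fin 3 → ℝ, (∀ k, InMoire R (u k)) ∧ LinearIndependent ℝ u := by
  refine ⟨((d : ℝ) • R)ᵀ, fun k => ⟨fun i => ⟨Z i k, ?_⟩, Pi.single k (d : ℝ), fun j => ?_, ?_⟩, ?_⟩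
  · simp [hZ]
  · exact ⟨(Pi.single k d : Fin 3 → ℤ) j, by rcases eq_or_ne j k with rfl | h <;> simp [*]⟩
  · ext i
    simp [mulVec_single, mul_comm]
  · have hunit : IsUnit ((d : ℝ) • R)ᵀ := by
      rw [isUnit_iff_isUnit_det, det_transpose, det_smul]
      simp [hd, hR]
    exact linearIndependent_rows_iff_isUnit.2 hunit

theorem moire_commensurate_iff_rational_general (R : Matrix (Fin 3) (Fin 3) ℝ)
    (hdet : R.det = 1) :
    (∃ u : Fin 3 → (Fin 3 → ℝ), (∀ k, InMoire R (u k)) ∧ LinearIndependent ℝ u) ↔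
      IsRatMat R := by
  refine ⟨fun ⟨u, hu, hli⟩ => IsRatMat.of_linearIndependent_inMoire hu hli, fun hR => ?_⟩
  obtain ⟨d, hd, Z, hZ⟩ := hR.exists_intCast_smul_eq
  exact exists_linearIndependent_inMoire_of_intCast_smul_eq (hdet ▸ one_ne_zero) hd hZ

/-- ℤ³ ∩ R·ℤ³ contains three linearly independent vectors iff R has rational entries. -/
theorem moire_commensurate_iff_rational (R : Matrix (Fin 3) (Fin 3) ℝ)
    (hO : R ∈ Matrix.orthogonalGroup (Fin 3) ℝ) (hdet : R.det = 1) :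
    (∃ u : Fin 3 → (Fin 3 → ℝ), (∀ k, InMoire R (u k)) ∧ LinearIndependent ℝ u) ↔
      IsRatMat R :=
  moire_commensurate_iff_rational_general R hdet
end

section
/- Let L = (l₁, l₂, l₃) be a nonzero integer vector and m, n integers with n ≠ 0. Then the rotation about axis L by angle θ = arccos((m² − n²|L|²)/(m² + n²|L|²)) has all rational entries, i.e., lies in SO(3, ℚ). -/
/-!
With `|L|² = l₁² + l₂² + l₃²`, the angle satisfies `tan (θ / 2) = |n| |L| / |m|`, and in this
half-angle parametrisation the Rodrigues matrix is `v ↦ q v q̄ / |q|²` for the quaternion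
`q = |m| + |n| (l₁ i + l₂ j + l₃ k)`. So it is `|q|⁻² Q` with `Q` an integer matrix and
`|q|² = m² + n² |L|²`, hence rational; orthogonality and `det = 1` follow from the polynomial
identities `Q Qᵀ = |q|⁴ I` and `det Q = |q|⁶`.
-/

open Matrix

/-- R is a rotation: orthogonal with determinant one. -/
def IsSO3 (R : Matrix (Fin 3) (Fin 3) ℝ) : Prop :=
  R ∈ Matrix.orthogonalGroup (Fin 3) ℝ ∧ R.det = 1

section Rotation

variable {α : Type*} [CommRing α]

def rodrigues (c s : α) (e : Fin 3 → α) : Matrix (Fin 3) (Fin 3) α :=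
  c • 1 + (1 - c) • vecMulVec e e + s • !![0, -e 2, e 1; e 2, 0, -e 0; -e 1, e 0, 0]

/-- The Euler–Rodrigues matrix of the quaternion `q = a + b i + c j + d k`: the matrix of
`v ↦ q v q̄`, i.e. `|q|²` times the rotation that `q` induces. -/
def quaternionRotation (a b c d : α) : Matrix (Fin 3) (Fin 3) α :=
  !![a ^ 2 + b ^ 2 - c ^ 2 - d ^ 2, 2 * (b * c - a * d), 2 * (b * d + a * c);
     2 * (b * c + a * d), a ^ 2 - b ^ 2 + c ^ 2 - d ^ 2, 2 * (c * d - a * b);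
     2 * (b * d - a * c), 2 * (c * d + a * b), a ^ 2 - b ^ 2 - c ^ 2 + d ^ 2]

theorem quaternionRotation_mul_transpose (a b c d : α) :
    quaternionRotation a b c d * (quaternionRotation a b c d)ᵀ
      = (a ^ 2 + b ^ 2 + c ^ 2 + d ^ 2) ^ 2 • 1 := by
  ext i j
  fin_cases i <;> fin_cases j <;>
    simp [quaternionRotation, mul_apply, Fin.sum_univ_three] <;> ring

theorem det_quaternionRotation (a b c d : α) :
    (quaternionRotation a b c d).det = (a ^ 2 + b ^ 2 + c ^ 2 + d ^ 2) ^ 3 := by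
  simp [quaternionRotation, det_fin_three]
  ring

end Rotation

theorem isSO3_smul_quaternionRotation {a b c d : ℝ} (h : a ^ 2 + b ^ 2 + c ^ 2 + d ^ 2 ≠ 0) :
    IsSO3 ((a ^ 2 + b ^ 2 + c ^ 2 + d ^ 2)⁻¹ • quaternionRotation a b c d) := by
  refine ⟨?_, ?_⟩
  · rw [mem_orthogonalGroup_iff, transpose_smul, smul_mul_smul_comm,
      quaternionRotation_mul_transpose, smul_smul, ← sq, ← mul_pow, inv_mul_cancel₀ h, one_pow,
      one_smul]
  · rw [det_smul, det_quaternionRotation, Fintype.card_fin, ← mul_pow, inv_mul_cancel₀ h, one_pow]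

theorem isRatMat_smul_quaternionRotation (a b c d : ℚ) :
    IsRatMat (((a : ℝ) ^ 2 + (b : ℝ) ^ 2 + (c : ℝ) ^ 2 + (d : ℝ) ^ 2)⁻¹ •
      quaternionRotation (a : ℝ) b c d) := by
  intro i j
  refine ⟨((a ^ 2 + b ^ 2 + c ^ 2 + d ^ 2)⁻¹ • quaternionRotation a b c d) i j, ?_⟩
  fin_cases i <;> fin_cases j <;> simp [quaternionRotation]

/-- The half-angle substitution `tan (θ / 2) = y / p`. -/
theorem rodrigues_eq_smul_quaternionRotation {K : Type*} [Field K] {p y : K} {e : Fin 3 → K}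
    (he : e 0 ^ 2 + e 1 ^ 2 + e 2 ^ 2 = 1) (hD : p ^ 2 + y ^ 2 ≠ 0) :
    rodrigues ((p ^ 2 - y ^ 2) / (p ^ 2 + y ^ 2)) (2 * p * y / (p ^ 2 + y ^ 2)) e
      = (p ^ 2 + (y * e 0) ^ 2 + (y * e 1) ^ 2 + (y * e 2) ^ 2)⁻¹ •
          quaternionRotation p (y * e 0) (y * e 1) (y * e 2) := by
  have hnorm : p ^ 2 + (y * e 0) ^ 2 + (y * e 1) ^ 2 + (y * e 2) ^ 2 = p ^ 2 + y ^ 2 := by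
    linear_combination y ^ 2 * he
  rw [hnorm]
  ext i j
  fin_cases i <;> fin_cases j <;>
    simp [rodrigues, quaternionRotation, vecMulVec_apply] <;> field_simp <;>
    first | ring1 | linear_combination y ^ 2 * he

section

open Real

theorem Real.cos_arccos_div_sq_add_sq {x y : ℝ} (h : 0 < x ^ 2 + y ^ 2) :
    cos (arccos ((x ^ 2 - y ^ 2) / (x ^ 2 + y ^ 2))) = (x ^ 2 - y ^ 2) / (x ^ 2 + y ^ 2) := by
  apply cos_arccos
  · rw [le_div_iff₀ h]; nlinarith
  · rw [div_le_one h]; nlinarith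

theorem Real.sin_arccos_div_sq_add_sq {x y : ℝ} (hx : 0 ≤ x) (hy : 0 ≤ y)
    (h : 0 < x ^ 2 + y ^ 2) :
    sin (arccos ((x ^ 2 - y ^ 2) / (x ^ 2 + y ^ 2))) = 2 * x * y / (x ^ 2 + y ^ 2) := by
  have hsq :
      1 - ((x ^ 2 - y ^ 2) / (x ^ 2 + y ^ 2)) ^ 2 = (2 * x * y / (x ^ 2 + y ^ 2)) ^ 2 := by
    field_simp
    ring
  rw [sin_arccos, hsq, sqrt_sq (by positivity)]

theorem rodrigues_arccos_eq_smul_quaternionRotation {p q : ℝ} {v : Fin 3 → ℝ}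
    (hv : 0 < v 0 ^ 2 + v 1 ^ 2 + v 2 ^ 2)
    (hD : 0 < p ^ 2 + q ^ 2 * (v 0 ^ 2 + v 1 ^ 2 + v 2 ^ 2)) :
    let N := v 0 ^ 2 + v 1 ^ 2 + v 2 ^ 2
    let θ := arccos ((p ^ 2 - q ^ 2 * N) / (p ^ 2 + q ^ 2 * N))
    rodrigues (cos θ) (sin θ) ((√N)⁻¹ • v)
      = (|p| ^ 2 + (|q| * v 0) ^ 2 + (|q| * v 1) ^ 2 + (|q| * v 2) ^ 2)⁻¹ •
          quaternionRotation |p| (|q| * v 0) (|q| * v 1) (|q| * v 2) := by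
  intro N θ
  have hN : √N ^ 2 = N := sq_sqrt hv.le
  have hN0 : √N ≠ 0 := (sqrt_pos.mpr hv).ne'
  set e := (√N)⁻¹ • v
  have he : e 0 ^ 2 + e 1 ^ 2 + e 2 ^ 2 = 1 := by
    simp only [e, Pi.smul_apply, smul_eq_mul, mul_pow, inv_pow, hN]
    field_simp
    exact div_self hv.ne'
  have hye : ∀ i, |q| * √N * e i = |q| * v i := fun i => by
    simp only [e, Pi.smul_apply, smul_eq_mul]
    field_simp
  have hθ : θ = arccos ((|p| ^ 2 - (|q| * √N) ^ 2) / (|p| ^ 2 + (|q| * √N) ^ 2)) := by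
    simp only [θ, sq_abs, mul_pow, hN]
  have hD' : 0 < |p| ^ 2 + (|q| * √N) ^ 2 := by rwa [sq_abs, mul_pow, sq_abs, hN]
  rw [hθ, cos_arccos_div_sq_add_sq hD',
    sin_arccos_div_sq_add_sq (abs_nonneg _) (by positivity) hD',
    rodrigues_eq_smul_quaternionRotation he hD'.ne']
  simp only [hye]

end

/-- Rodrigues rotation about an integer axis L by θ = arccos((m²−n²|L|²)/(m²+n²|L|²))
is a rational special orthogonal matrix. -/
theorem rodrigues_rational_rotation (l : Fin 3 → ℤ) (hl : l ≠ 0)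
    (m n : ℤ) (hn : n ≠ 0) :
    let L : Fin 3 → ℝ := fun i => (l i : ℝ)
    let L2 : ℝ := L 0 ^ 2 + L 1 ^ 2 + L 2 ^ 2
    let e : Fin 3 → ℝ := (Real.sqrt L2)⁻¹ • L
    let θ : ℝ := Real.arccos (((m : ℝ) ^ 2 - (n : ℝ) ^ 2 * L2) / ((m : ℝ) ^ 2 + (n : ℝ) ^ 2 * L2))
    let K : Matrix (Fin 3) (Fin 3) ℝ := !![0, -e 2, e 1; e 2, 0, -e 0; -e 1, e 0, 0]
    let R : Matrix (Fin 3) (Fin 3) ℝ :=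
      Real.cos θ • (1 : Matrix (Fin 3) (Fin 3) ℝ)
        + (1 - Real.cos θ) • vecMulVec e e + Real.sin θ • K
    IsRatMat R ∧ IsSO3 R := by
  intro L L2 e θ K R
  have hL2 : 0 < L2 := by
    obtain ⟨i, hi⟩ := Function.ne_iff.mp hl
    have hLi : L i ≠ 0 := Int.cast_ne_zero.mpr hi
    have hsum : L2 = ∑ j, L j ^ 2 := by simp only [L2, Fin.sum_univ_three]
    rw [hsum]
    exact Finset.sum_pos' (fun j _ => sq_nonneg _) ⟨i, Finset.mem_univ _, by positivity⟩
  have hD : 0 < (m : ℝ) ^ 2 + (n : ℝ) ^ 2 * L2 := by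
    have : (n : ℝ) ≠ 0 := Int.cast_ne_zero.mpr hn
    positivity
  have hR : R = _ := rodrigues_arccos_eq_smul_quaternionRotation hL2 hD
  have hnorm : 0 < |(m : ℝ)| ^ 2 + (|(n : ℝ)| * L 0) ^ 2 + (|(n : ℝ)| * L 1) ^ 2
      + (|(n : ℝ)| * L 2) ^ 2 := by
    simp only [sq_abs, mul_pow]
    linear_combination hD
  rw [hR]
  refine ⟨?_, isSO3_smul_quaternionRotation hnorm.ne'⟩
  simpa using isRatMat_smul_quaternionRotation |(m : ℚ)| (|(n : ℚ)| * l 0) (|(n : ℚ)| * l 1)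
    (|(n : ℚ)| * l 2)
end

section
/- If R ∈ SO(3, ℚ) is a rotation with axis along an integer vector L, then sin θ / |L| is rational, where θ is the rotation angle. Consequently there exist coprime integers m, n with cos θ = (m² − n²|L|²)/(m² + n²|L|²). -/
open Matrix

/-- For a rational rotation with integer axis L (gcd of components 1), sin θ/|L| is
rational, and cos θ admits the parametrization (m²−n²|L|²)/(m²+n²|L|²) with m, n coprime. -/
theorem rational_rotation_angle_parametrization (R : Matrix (Fin 3) (Fin 3) ℝ)
    (hSO : IsSO3 R) (hQ : IsRatMat R) (l : Fin 3 → ℤ) (hl : l ≠ 0)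
    (hgcd : Int.gcd (Int.gcd (l 0) (l 1)) (l 2) = 1)
    (haxis : R.mulVec (fun i => (l i : ℝ)) = fun i => (l i : ℝ)) (θ : ℝ)
    (htr : R.trace = 1 + 2 * Real.cos θ)
    (hanti :
      let L : Fin 3 → ℝ := fun i => (l i : ℝ)
      let e : Fin 3 → ℝ := (Real.sqrt (L 0 ^ 2 + L 1 ^ 2 + L 2 ^ 2))⁻¹ • L
      R - Rᵀ = (2 * Real.sin θ) • !![0, -e 2, e 1; e 2, 0, -e 0; -e 1, e 0, 0]) :
    let L2 : ℝ := (l 0 : ℝ) ^ 2 + (l 1 : ℝ) ^ 2 + (l 2 : ℝ) ^ 2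
    (∃ q : ℚ, Real.sin θ / Real.sqrt L2 = (q : ℝ)) ∧
      ∃ m n : ℤ, Int.gcd m n = 1 ∧
        Real.cos θ = ((m : ℝ) ^ 2 - (n : ℝ) ^ 2 * L2) / ((m : ℝ) ^ 2 + (n : ℝ) ^ 2 * L2) := by
  intro L2
  -- N : the integer squared norm
  set N : ℤ := l 0 ^ 2 + l 1 ^ 2 + l 2 ^ 2 with hN
  have hL2N : L2 = (N : ℝ) := by
    show ((l 0:ℝ)^2 + (l 1:ℝ)^2 + (l 2:ℝ)^2) = ((l 0 ^ 2 + l 1 ^ 2 + l 2 ^ 2 : ℤ) : ℝ)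
    push_cast
    ring
  have hNpos : 0 < N := by
    rcases lt_or_ge 0 N with h|h
    · exact h
    · exfalso
      rw [hN] at h
      have e0 : l 0 = 0 := by
        have h5 : l 0 ^ 2 = 0 :=
          le_antisymm (by nlinarith [sq_nonneg (l 1), sq_nonneg (l 2)]) (sq_nonneg _)
        exact pow_eq_zero_iff two_ne_zero |>.mp h5
      have e1 : l 1 = 0 := by
        have h5 : l 1 ^ 2 = 0 :=
          le_antisymm (by nlinarith [sq_nonneg (l 0), sq_nonneg (l 2)]) (sq_nonneg _)
        exact pow_eq_zero_iff two_ne_zero |>.mp h5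
      have e2 : l 2 = 0 := by
        have h5 : l 2 ^ 2 = 0 :=
          le_antisymm (by nlinarith [sq_nonneg (l 0), sq_nonneg (l 1)]) (sq_nonneg _)
        exact pow_eq_zero_iff two_ne_zero |>.mp h5
      exact hl (funext fun i => by fin_cases i <;> first | exact e0 | exact e1 | exact e2)
  have hL2pos : (0:ℝ) < L2 := by rw [hL2N]; exact_mod_cast hNpos
  have hS : (0:ℝ) < Real.sqrt L2 := Real.sqrt_pos.mpr hL2pos
  -- rationality of cos θ
  obtain ⟨q00, h00⟩ := hQ 0 0
  obtain ⟨q11, h11⟩ := hQ 1 1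
  obtain ⟨q22, h22⟩ := hQ 2 2
  have htr3 : R 0 0 + R 1 1 + R 2 2 = 1 + 2 * Real.cos θ := by
    rw [← htr, Matrix.trace_fin_three]
  have hc : Real.cos θ = (((q00 + q11 + q22 - 1) / 2 : ℚ) : ℝ) := by
    push_cast
    rw [h00, h11, h22] at htr3
    linarith
  set c : ℚ := (q00 + q11 + q22 - 1) / 2 with hcdef
  -- rationality of sin θ / √L2
  have hs : ∃ s : ℚ, Real.sin θ / Real.sqrt L2 = (s : ℝ) := by
    have key : ∀ i : Fin 3, ∃ q : ℚ, Real.sin θ / Real.sqrt L2 * (l i : ℝ) = (q : ℝ) := by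
      intro i
      obtain ⟨q21, e21⟩ := hQ 2 1
      obtain ⟨q12, e12⟩ := hQ 1 2
      obtain ⟨q02, e02⟩ := hQ 0 2
      obtain ⟨q20, e20⟩ := hQ 2 0
      obtain ⟨q10, e10⟩ := hQ 1 0
      obtain ⟨q01, e01⟩ := hQ 0 1
      have hsqeq : Real.sqrt ((l 0:ℝ)^2 + (l 1:ℝ)^2 + (l 2:ℝ)^2) = Real.sqrt L2 := rfl
      fin_cases i
      · refine ⟨(q21 - q12)/2, ?_⟩
        have h := congrFun (congrFun hanti 2) 1
        simp [Matrix.sub_apply, Matrix.transpose_apply, Matrix.smul_apply, Pi.smul_apply,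
          smul_eq_mul, hsqeq] at h
        rw [e21, e12] at h
        push_cast
        linear_combination (-1/2 : ℝ) * h
      · refine ⟨(q02 - q20)/2, ?_⟩
        have h := congrFun (congrFun hanti 0) 2
        simp [Matrix.sub_apply, Matrix.transpose_apply, Matrix.smul_apply, Pi.smul_apply,
          smul_eq_mul, hsqeq] at h
        rw [e02, e20] at h
        push_cast
        linear_combination (-1/2 : ℝ) * h
      · refine ⟨(q10 - q01)/2, ?_⟩
        have h := congrFun (congrFun hanti 1) 0
        simp [Matrix.sub_apply, Matrix.transpose_apply, Matrix.smul_apply, Pi.smul_apply,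
          smul_eq_mul, hsqeq] at h
        rw [e10, e01] at h
        push_cast
        linear_combination (-1/2 : ℝ) * h
    obtain ⟨r0, hr0⟩ := key 0
    obtain ⟨r1, hr1⟩ := key 1
    obtain ⟨r2, hr2⟩ := key 2
    -- Bezout
    obtain ⟨x, y, z, hxyz⟩ : ∃ x y z : ℤ, l 0 * x + l 1 * y + l 2 * z = 1 := by
      have b1 := Int.gcd_eq_gcd_ab (l 0) (l 1)
      have b2 := Int.gcd_eq_gcd_ab ((Int.gcd (l 0) (l 1) : ℤ)) (l 2)
      refine ⟨Int.gcdA (l 0) (l 1) * Int.gcdA ((Int.gcd (l 0) (l 1) : ℤ)) (l 2),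
        Int.gcdB (l 0) (l 1) * Int.gcdA ((Int.gcd (l 0) (l 1) : ℤ)) (l 2),
        Int.gcdB ((Int.gcd (l 0) (l 1) : ℤ)) (l 2), ?_⟩
      have h1 : (Int.gcd ((Int.gcd (l 0) (l 1) : ℤ)) (l 2) : ℤ) = 1 := by
        exact_mod_cast congrArg (Nat.cast : ℕ → ℤ) hgcd
      rw [h1] at b2
      linear_combination b2.symm - Int.gcdA ((Int.gcd (l 0) (l 1) : ℤ)) (l 2) * b1
    refine ⟨x * r0 + y * r1 + z * r2, ?_⟩
    have hxyzR : ((l 0 : ℝ) * x + (l 1 : ℝ) * y + (l 2 : ℝ) * z) = 1 := by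
      exact_mod_cast congrArg (Int.cast : ℤ → ℝ) hxyz
    push_cast
    calc Real.sin θ / Real.sqrt L2
        = Real.sin θ / Real.sqrt L2 * ((l 0 : ℝ) * x + (l 1 : ℝ) * y + (l 2 : ℝ) * z) := by
          rw [hxyzR]; ring
      _ = (x:ℝ) * (Real.sin θ / Real.sqrt L2 * (l 0:ℝ)) + (y:ℝ) * (Real.sin θ / Real.sqrt L2 * (l 1:ℝ))
          + (z:ℝ) * (Real.sin θ / Real.sqrt L2 * (l 2:ℝ)) := by ring
      _ = (x:ℝ) * r0 + (y:ℝ) * r1 + (z:ℝ) * r2 := by rw [hr0, hr1, hr2]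
  obtain ⟨s, hseq⟩ := hs
  refine ⟨⟨s, hseq⟩, ?_⟩
  -- Pythagoras in ℚ
  have hsin : Real.sin θ = (s:ℝ) * Real.sqrt L2 := by
    rw [div_eq_iff (ne_of_gt hS)] at hseq; exact hseq
  have hpyth : (s:ℚ)^2 * N + c^2 = 1 := by
    have h1 : Real.sin θ ^ 2 + Real.cos θ ^ 2 = 1 := Real.sin_sq_add_cos_sq θ
    have h2 : Real.sqrt L2 ^ 2 = (l 0:ℝ)^2 + (l 1:ℝ)^2 + (l 2:ℝ)^2 :=
      Real.sq_sqrt hL2pos.le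
    rw [hsin, hc] at h1
    have h3 : ((s^2 * N + c^2 : ℚ) : ℝ) = ((1:ℚ) : ℝ) := by
      have hNR : ((N:ℤ):ℝ) = (l 0:ℝ)^2 + (l 1:ℝ)^2 + (l 2:ℝ)^2 := by
        rw [hN]; push_cast; ring
      push_cast
      linear_combination h1 - (s:ℝ)^2 * h2 + (s:ℝ)^2 * hNR
    exact_mod_cast h3
  have hNQpos : (0:ℚ) < (N:ℚ) := by exact_mod_cast hNpos
  by_cases hc1 : c = -1
  · refine ⟨0, 1, by decide, ?_⟩
    rw [hc, hc1]
    have hne : L2 ≠ 0 := ne_of_gt hL2pos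
    push_cast
    rw [show ((0:ℝ)^2 - 1^2*L2) = -L2 by ring, show ((0:ℝ)^2 + 1^2*L2) = L2 by ring,
      neg_div, div_self hne]
  · have hcne : (1 + c : ℚ) ≠ 0 := fun h => hc1 (by linarith)
    set t : ℚ := s / (1 + c) with htdef
    set m : ℤ := (t.den : ℤ) with hmdef
    set n : ℤ := t.num with hndef
    have hmQpos : (0:ℚ) < (m:ℚ) := by
      rw [hmdef]
      exact_mod_cast t.pos
    have hmQ : ((m:ℚ)) ≠ 0 := ne_of_gt hmQpos
    have hn_eq : (n:ℚ) = t * m := by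
      have h4 : (n:ℚ) / (m:ℚ) = t := by
        rw [hmdef, hndef]
        push_cast
        exact Rat.num_div_den t
      rw [← h4, div_mul_cancel₀ _ hmQ]
    have h2 : (n:ℚ) * (1 + c) = s * m := by
      rw [hn_eq, htdef]
      field_simp
    have hG : (1 + c) * (c * ((m:ℚ)^2 + (n:ℚ)^2 * N) - ((m:ℚ)^2 - (n:ℚ)^2 * N)) = 0 := by
      linear_combination ((N:ℚ) * ((n:ℚ) * (1 + c) + s * (m:ℚ))) * h2 + (m:ℚ)^2 * hpyth
    have hG2 : c * ((m:ℚ)^2 + (n:ℚ)^2 * N) = (m:ℚ)^2 - (n:ℚ)^2 * N := by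
      rcases mul_eq_zero.mp hG with h | h
      · exact absurd h hcne
      · linarith
    have hden : (0:ℚ) < (m:ℚ)^2 + (n:ℚ)^2 * N := by
      have h5 := pow_pos hmQpos 2
      nlinarith [sq_nonneg ((n:ℚ))]
    have hcq : c = ((m:ℚ)^2 - (n:ℚ)^2 * N) / ((m:ℚ)^2 + (n:ℚ)^2 * N) := by
      rw [eq_div_iff (ne_of_gt hden)]
      linarith [hG2]
    refine ⟨m, n, ?_, ?_⟩
    · show Int.gcd m n = 1
      rw [hmdef, hndef]
      simp [Int.gcd]
      exact Nat.Coprime.symm t.reduced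
    · rw [hc, hcq, hL2N]
      push_cast
      ring
end
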